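/- The map F_II(α,β): (x,y) ↦ ((y/α)P, (x/β)P) with P = (αx−βy+β−α)/(x−y) satisfies the Yang–Baxter relation on all triples where the relevant denominators are nonzero and the parameters are nonzero. -/

import Mathlib

open Function

variable {K : Type*} [Field K]

/-- lift a map on pairs to act on coordinates 1,2 of a triple -/
def lift12 {X : Type*} (f : X × X → X × X) : X × X × X → X × X × X :=
  fun p => ((f (p.1, p.2.1)).1, (f (p.1, p.2.1)).2, p.2.2)

/-- lift to coordinates 1,3 -/
def lift13 {X : Type*} (f : X × X → X × X) : X × X × X → X × X × X :=
  fun p => ((f (p.1, p.2.2)).1, p.2.1, (f (p.1, p.2.2)).2)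

/-- lift to coordinates 2,3 -/
def lift23 {X : Type*} (f : X × X → X × X) : X × X × X → X × X × X :=
  fun p => (p.1, (f (p.2.1, p.2.2)).1, (f (p.2.1, p.2.2)).2)

def FIIMap (a b : K) : K × K → K × K :=
  fun p => ((p.2 / a) * ((a*p.1 - b*p.2 + b - a)/(p.1 - p.2)), (p.1 / b) * ((a*p.1 - b*p.2 + b - a)/(p.1 - p.2)))

/-!
`F_II` is symmetric under the swap `σ` of coordinates: `σ ∘ F(a,b) ∘ σ = F(b,a)`. Hence reversing
triples turns the right-hand side `R₁₂ R₁₃ R₂₃` of the Yang–Baxter relation into the left-hand side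
`R₂₃ R₁₃ R₁₂` with reversed parameters, and only the left-hand side has to be computed. It sends
`(x, y, z)` to `(z A, y A B, x B)` for rational functions `A`, `B` of `(a₁, a₂, a₃; x, y, z)`, so the
relation amounts to `A(a₁, a₂, a₃; x, y, z) = B(a₃, a₂, a₁; z, y, x)` (together with the same
identity for the reversed data), which is one polynomial identity after clearing denominators.
-/

def tripleRev {X : Type*} (p : X × X × X) : X × X × X := (p.2.2, p.2.1, p.1)

theorem tripleRev_mk {X : Type*} (a b c : X) : tripleRev (a, b, c) = (c, b, a) := rfl

theorem tripleRev_tripleRev {X : Type*} (p : X × X × X) : tripleRev (tripleRev p) = p := rfl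

section Reversal
variable {X : Type*} {f g : X × X → X × X}

theorem lift12_tripleRev (hfg : ∀ q, (f q.swap).swap = g q) (p : X × X × X) :
    lift12 f (tripleRev p) = tripleRev (lift23 g p) := by
  simp only [lift12, lift23, tripleRev, ← hfg, Prod.swap_prod_mk, Prod.fst_swap, Prod.snd_swap]

theorem lift13_tripleRev (hfg : ∀ q, (f q.swap).swap = g q) (p : X × X × X) :
    lift13 f (tripleRev p) = tripleRev (lift13 g p) := by
  simp only [lift13, tripleRev, ← hfg, Prod.swap_prod_mk, Prod.fst_swap, Prod.snd_swap]

theorem lift23_tripleRev (hfg : ∀ q, (f q.swap).swap = g q) (p : X × X × X) :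
    lift23 f (tripleRev p) = tripleRev (lift12 g p) := by
  simp only [lift12, lift23, tripleRev, ← hfg, Prod.swap_prod_mk, Prod.fst_swap, Prod.snd_swap]

theorem lift12_lift13_lift23_eq_tripleRev {ι : Type*} (R : ι → ι → X × X → X × X)
    (hR : ∀ a b q, (R a b q.swap).swap = R b a q) (a1 a2 a3 : ι) (p : X × X × X) :
    lift12 (R a1 a2) (lift13 (R a1 a3) (lift23 (R a2 a3) p)) =
      tripleRev (lift23 (R a2 a1) (lift13 (R a3 a1) (lift12 (R a3 a2) (tripleRev p)))) := by
  rw [lift12_tripleRev (hR _ _), lift13_tripleRev (hR _ _), lift23_tripleRev (hR _ _),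
    tripleRev_tripleRev]

end Reversal

namespace FIIMap

def num (a b x y : K) : K := a*x - b*y + b - a

def factor (a b x y : K) : K := num a b x y / (x - y)

theorem apply_mk (a b x y : K) :
    FIIMap a b (x, y) = (y / a * factor a b x y, x / b * factor a b x y) := rfl

theorem factor_comm (a b x y : K) : factor b a y x = factor a b x y := by
  rw [factor, factor, num, num, ← neg_div_neg_eq]
  ring

theorem swap_apply_swap (a b : K) (q : K × K) : (FIIMap a b q.swap).swap = FIIMap b a q := by
  obtain ⟨x, y⟩ := q
  simp only [Prod.swap_prod_mk, apply_mk, factor_comm]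

theorem factor_div_div (a b X Y W V : K) (hW : W ≠ 0) (hV : V ≠ 0) :
    factor a b (X / W) (Y / V) = (a*X*V - b*Y*W + (b - a)*W*V) / (X*V - Y*W) := by
  rw [factor, num, ← div_div_div_cancel_right₀ (mul_ne_zero hW hV) (a*X*V - b*Y*W + (b - a)*W*V)]
  congr 1 <;> field_simp; ring

section Composite
variable (a1 a2 a3 x y z : K)

/- Write `(x₁, y₁, z) = lift12 (FIIMap a1 a2) (x, y, z)` and `(x₂, y₁, z₂)` for its image
under `lift13 (FIIMap a1 a3)`. Then `x₁ - z = den13 / (a₁ (x - y))`,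
`factor a1 a3 x₁ z = a₁ num13 / den13`, `y₁ - z₂ = num a1 a2 x y * den23 / (a₂ a₃ (x - y) den13)`
and `factor a2 a3 y₁ z₂ = a₂ a₃ num23 / (num a1 a2 x y * den23)`. -/
def den13 : K := y * num a1 a2 x y - a1*z*(x - y)

def num13 : K := y * num a1 a2 x y + (a3 - a3*z - a1)*(x - y)

def den23 : K := a3*x*den13 a1 a2 x y z - a2*y*num13 a1 a2 a3 x y z

def num23 : K := x * num a1 a2 x y * den13 a1 a2 x y z - y * num a1 a2 x y * num13 a1 a2 a3 x y z
  + (a3 - a2)*(x - y)*den13 a1 a2 x y z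

theorem num13_mul_den23_eq :
    num13 a1 a2 a3 x y z * ((z - y) * den23 a3 a2 a1 z y x) =
      num23 a3 a2 a1 z y x * den13 a1 a2 x y z := by
  simp only [num13, den23, num23, den13, num]
  ring

theorem lift12_apply : lift12 (FIIMap a1 a2) (x, y, z) =
    (y * num a1 a2 x y / (a1 * (x - y)), x * num a1 a2 x y / (a2 * (x - y)), z) := by
  simp only [lift12, apply_mk, factor, div_mul_div_comm]

variable {a1 a2 a3 x y z}

theorem lift13_lift12_apply (ha1 : a1 ≠ 0) (hxy : x ≠ y) :
    lift13 (FIIMap a1 a3) (lift12 (FIIMap a1 a2) (x, y, z)) =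
      (z * num13 a1 a2 a3 x y z / den13 a1 a2 x y z, x * num a1 a2 x y / (a2 * (x - y)),
        y * num a1 a2 x y * num13 a1 a2 a3 x y z / (a3 * (x - y) * den13 a1 a2 x y z)) := by
  have hW : a1 * (x - y) ≠ 0 := mul_ne_zero ha1 (sub_ne_zero.2 hxy)
  have hP : factor a1 a3 (y * num a1 a2 x y / (a1 * (x - y))) z =
      a1 * num13 a1 a2 a3 x y z / den13 a1 a2 x y z := by
    conv_lhs => rw [← div_one z]
    rw [factor_div_div _ _ _ _ _ _ hW one_ne_zero, num13, den13]
    congr 1 <;> ring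
  rw [lift12_apply, lift13]
  simp only [apply_mk, hP, Prod.mk.injEq]
  refine ⟨?_, trivial, ?_⟩ <;> field_simp

theorem lift23_lift13_lift12_apply (ha1 : a1 ≠ 0) (ha2 : a2 ≠ 0) (ha3 : a3 ≠ 0) (hxy : x ≠ y)
    (hd : den13 a1 a2 x y z ≠ 0) (hp : num a1 a2 x y ≠ 0) :
    lift23 (FIIMap a2 a3) (lift13 (FIIMap a1 a3) (lift12 (FIIMap a1 a2) (x, y, z))) =
      (z * (num13 a1 a2 a3 x y z / den13 a1 a2 x y z),
        y * (num13 a1 a2 a3 x y z / den13 a1 a2 x y z) *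
          (num23 a1 a2 a3 x y z / ((x - y) * den23 a1 a2 a3 x y z)),
        x * (num23 a1 a2 a3 x y z / ((x - y) * den23 a1 a2 a3 x y z))) := by
  have hxy' : x - y ≠ 0 := sub_ne_zero.2 hxy
  have hP : factor a2 a3 (x * num a1 a2 x y / (a2 * (x - y)))
      (y * num a1 a2 x y * num13 a1 a2 a3 x y z / (a3 * (x - y) * den13 a1 a2 x y z)) =
      a2 * a3 * num23 a1 a2 a3 x y z / (num a1 a2 x y * den23 a1 a2 a3 x y z) := by
    rw [factor_div_div _ _ _ _ _ _ (by positivity) (by positivity),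
      ← mul_div_mul_right (a2 * a3 * num23 a1 a2 a3 x y z) _ hxy', num23, den23]
    congr 1 <;> ring
  rw [lift13_lift12_apply ha1 hxy, lift23]
  simp only [apply_mk, hP, Prod.mk.injEq]
  refine ⟨by ring, ?_, ?_⟩ <;> field_simp

theorem den13_ne_zero (ha1 : a1 ≠ 0) (hxy : x ≠ y)
    (h : (lift12 (FIIMap a1 a2) (x, y, z)).1 ≠ (lift12 (FIIMap a1 a2) (x, y, z)).2.2) :
    den13 a1 a2 x y z ≠ 0 := by
  have hsub : (lift12 (FIIMap a1 a2) (x, y, z)).1 - (lift12 (FIIMap a1 a2) (x, y, z)).2.2 =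
      den13 a1 a2 x y z / (a1 * (x - y)) := by
    have hW : a1 * (x - y) ≠ 0 := mul_ne_zero ha1 (sub_ne_zero.2 hxy)
    rw [lift12_apply, den13]
    field_simp
  exact (div_ne_zero_iff.1 (hsub ▸ sub_ne_zero.2 h)).1

theorem num_ne_zero_and_den23_ne_zero (ha1 : a1 ≠ 0) (ha2 : a2 ≠ 0) (ha3 : a3 ≠ 0) (hxy : x ≠ y)
    (hd : den13 a1 a2 x y z ≠ 0)
    (h : (lift13 (FIIMap a1 a3) (lift12 (FIIMap a1 a2) (x, y, z))).2.1 ≠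
      (lift13 (FIIMap a1 a3) (lift12 (FIIMap a1 a2) (x, y, z))).2.2) :
    num a1 a2 x y ≠ 0 ∧ den23 a1 a2 a3 x y z ≠ 0 := by
  have hsub : (lift13 (FIIMap a1 a3) (lift12 (FIIMap a1 a2) (x, y, z))).2.1 -
      (lift13 (FIIMap a1 a3) (lift12 (FIIMap a1 a2) (x, y, z))).2.2 =
      num a1 a2 x y * den23 a1 a2 a3 x y z / (a2 * a3 * (x - y) * den13 a1 a2 x y z) := by
    rw [lift13_lift12_apply ha1 hxy, den23]
    field_simp
  exact mul_ne_zero_iff.1 (div_ne_zero_iff.1 (hsub ▸ sub_ne_zero.2 h)).1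

theorem num13_div_den13_eq (hd : den13 a1 a2 x y z ≠ 0) (hzy : z ≠ y)
    (hm : den23 a3 a2 a1 z y x ≠ 0) :
    num13 a1 a2 a3 x y z / den13 a1 a2 x y z =
      num23 a3 a2 a1 z y x / ((z - y) * den23 a3 a2 a1 z y x) := by
  rw [div_eq_div_iff hd (mul_ne_zero (sub_ne_zero.2 hzy) hm)]
  exact num13_mul_den23_eq a1 a2 a3 x y z

end Composite

end FIIMap

theorem yangBaxter_FII (a1 a2 a3 x y z : K)
    (hp1 : a1 ≠ 0) (hp2 : a2 ≠ 0) (hp3 : a3 ≠ 0)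
    (h1 : (x - y) ≠ 0)
    (h2 : ((lift12 (FIIMap a1 a2) (x, y, z)).1 - (lift12 (FIIMap a1 a2) (x, y, z)).2.2) ≠ 0)
    (h3 : ((lift13 (FIIMap a1 a3) (lift12 (FIIMap a1 a2) (x, y, z))).2.1 - (lift13 (FIIMap a1 a3) (lift12 (FIIMap a1 a2) (x, y, z))).2.2) ≠ 0)
    (h4 : (y - z) ≠ 0)
    (h5 : ((lift23 (FIIMap a2 a3) (x, y, z)).1 - (lift23 (FIIMap a2 a3) (x, y, z)).2.2) ≠ 0)
    (h6 : ((lift13 (FIIMap a1 a3) (lift23 (FIIMap a2 a3) (x, y, z))).1 - (lift13 (FIIMap a1 a3) (lift23 (FIIMap a2 a3) (x, y, z))).2.1) ≠ 0) :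
    lift23 (FIIMap a2 a3) (lift13 (FIIMap a1 a3) (lift12 (FIIMap a1 a2) (x, y, z))) =
      lift12 (FIIMap a1 a2) (lift13 (FIIMap a1 a3) (lift23 (FIIMap a2 a3) (x, y, z))) := by
  have hxy := sub_ne_zero.1 h1
  have hzy := (sub_ne_zero.1 h4).symm
  have hd := FIIMap.den13_ne_zero hp1 hxy (sub_ne_zero.1 h2)
  obtain ⟨hp, hm⟩ :=
    FIIMap.num_ne_zero_and_den23_ne_zero hp1 hp2 hp3 hxy hd (sub_ne_zero.1 h3)
  rw [← tripleRev_mk z y x, lift23_tripleRev (FIIMap.swap_apply_swap a2 a3)] at h5 h6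
  rw [lift13_tripleRev (FIIMap.swap_apply_swap a1 a3)] at h6
  simp only [tripleRev] at h5 h6
  have hd' := FIIMap.den13_ne_zero hp3 hzy (sub_ne_zero.1 h5).symm
  obtain ⟨hp', hm'⟩ :=
    FIIMap.num_ne_zero_and_den23_ne_zero hp3 hp2 hp1 hzy hd' (sub_ne_zero.1 h6).symm
  rw [lift12_lift13_lift23_eq_tripleRev FIIMap FIIMap.swap_apply_swap, tripleRev_mk x y z,
    FIIMap.lift23_lift13_lift12_apply hp1 hp2 hp3 hxy hd hp,
    FIIMap.lift23_lift13_lift12_apply hp3 hp2 hp1 hzy hd' hp',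
    FIIMap.num13_div_den13_eq hd hzy hm', FIIMap.num13_div_den13_eq hd' hxy hm,
    tripleRev_mk, mul_right_comm y]
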